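/- arXiv:1103.3995 — 5 statements merged into one kernel-verified Lean document; each statement's English description precedes it below -/
import Mathlib

section
/- Let a, b, c and (l_ij), (m_ij) and F be as in the generalized Monge–Ampère setup. If p : ℝ² → ℝ is a twice continuously differentiable biperiodic function satisfying the generalized Monge–Ampère equation (GMA), then necessarily ∫_{𝕋²}(e^F − ab + c²) = 0. -/
open MeasureTheory

/-- Partial derivative in the first variable. -/
noncomputable def pdx (p : ℝ × ℝ → ℝ) (z : ℝ × ℝ) : ℝ := fderiv ℝ p z (1, 0)

/-- Partial derivative in the second variable. -/
noncomputable def pdy (p : ℝ × ℝ → ℝ) (z : ℝ × ℝ) : ℝ := fderiv ℝ p z (0, 1)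

/-- A function `ℝ² → ℝ` is biperiodic if it has period 1 in each variable. -/
def Biperiodic (p : ℝ × ℝ → ℝ) : Prop :=
  ∀ x y : ℝ, p (x + 1, y) = p (x, y) ∧ p (x, y + 1) = p (x, y)

/-- The integral over the torus `𝕋² = ℝ²/ℤ²` of (the descent of) a biperiodic function. -/
noncomputable def torusInt (f : ℝ × ℝ → ℝ) : ℝ := ∫ x in (0:ℝ)..1, ∫ y in (0:ℝ)..1, f (x, y)

/-!
Write `u = p_x` and `v = p_y`. Expanding the equation, the conditions on `l` and `m` make the
terms quadratic in `(u, v)` cancel, and `e^F - ab + c²` becomes the Jacobian `u_x v_y - u_y v_x`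
plus the divergence of the vector field `(gmaFluxX, gmaFluxY)` built from `p`, `u` and `v`.
Divergences of biperiodic fields integrate to zero over the torus, and so does the Jacobian of
two `C¹` biperiodic functions. Since `p` is only `C²`, the latter cannot be obtained by
integrating by parts twice: instead `v_y` is replaced by a difference quotient in `y`, the
translation is moved onto `u`, one integrates by parts in `x`, and passes to the limit.
-/

open Filter Topology Set

section PartialDerivatives

variable {f g : ℝ × ℝ → ℝ}

theorem hasDerivAt_pdx {x y : ℝ} (hf : DifferentiableAt ℝ f (x, y)) :
    HasDerivAt (fun t => f (t, y)) (pdx f (x, y)) x :=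
  hf.hasFDerivAt.comp_hasDerivAt x ((hasDerivAt_id x).prodMk (hasDerivAt_const x y))

theorem hasDerivAt_pdy {x y : ℝ} (hf : DifferentiableAt ℝ f (x, y)) :
    HasDerivAt (fun t => f (x, t)) (pdy f (x, y)) y :=
  hf.hasFDerivAt.comp_hasDerivAt y ((hasDerivAt_const y x).prodMk (hasDerivAt_id y))

theorem pdx_eq_of_hasDerivAt {z : ℝ × ℝ} {d : ℝ} (hf : DifferentiableAt ℝ f z)
    (h : HasDerivAt (fun t => f (t, z.2)) d z.1) : pdx f z = d :=
  (hasDerivAt_pdx hf).unique h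

theorem pdy_eq_of_hasDerivAt {z : ℝ × ℝ} {d : ℝ} (hf : DifferentiableAt ℝ f z)
    (h : HasDerivAt (fun t => f (z.1, t)) d z.2) : pdy f z = d :=
  (hasDerivAt_pdy hf).unique h

theorem pdx_mul {z : ℝ × ℝ} (hf : DifferentiableAt ℝ f z) (hg : DifferentiableAt ℝ g z) :
    pdx (fun w => f w * g w) z = pdx f z * g z + f z * pdx g z :=
  pdx_eq_of_hasDerivAt (hf.mul hg) ((hasDerivAt_pdx hf).mul (hasDerivAt_pdx hg))

theorem pdx_comp_add (w z : ℝ × ℝ) : pdx (fun z => f (z + w)) z = pdx f (z + w) := by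
  rw [pdx, pdx, fderiv_comp_add_right]

theorem pdy_comp_add (w z : ℝ × ℝ) : pdy (fun z => f (z + w)) z = pdy f (z + w) := by
  rw [pdy, pdy, fderiv_comp_add_right]

theorem ContDiff.pdx {m n : WithTop ℕ∞} (hf : ContDiff ℝ n f) (hmn : m + 1 ≤ n) :
    ContDiff ℝ m (_root_.pdx f) :=
  (ContinuousLinearMap.apply ℝ ℝ ((1 : ℝ), (0 : ℝ))).contDiff.comp (hf.fderiv_right hmn)

theorem ContDiff.pdy {m n : WithTop ℕ∞} (hf : ContDiff ℝ n f) (hmn : m + 1 ≤ n) :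
    ContDiff ℝ m (_root_.pdy f) :=
  (ContinuousLinearMap.apply ℝ ℝ ((0 : ℝ), (1 : ℝ))).contDiff.comp (hf.fderiv_right hmn)

theorem ContDiff.continuous_pdx (hf : ContDiff ℝ 1 f) : Continuous (_root_.pdx f) :=
  (hf.pdx (m := 0) le_rfl).continuous

theorem ContDiff.continuous_pdy (hf : ContDiff ℝ 1 f) : Continuous (_root_.pdy f) :=
  (hf.pdy (m := 0) le_rfl).continuous

theorem pdx_pdy_comm (hf : ContDiff ℝ 2 f) (z : ℝ × ℝ) : pdx (pdy f) z = pdy (pdx f) z := by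
  have hd : DifferentiableAt ℝ (fderiv ℝ f) z :=
    (hf.fderiv_right (m := 1) le_rfl).differentiable one_ne_zero z
  have hx := congrArg (· ((1 : ℝ), (0 : ℝ)))
    (hd.hasFDerivAt.clm_apply (hasFDerivAt_const ((0 : ℝ), (1 : ℝ)) z)).fderiv
  have hy := congrArg (· ((0 : ℝ), (1 : ℝ)))
    (hd.hasFDerivAt.clm_apply (hasFDerivAt_const ((1 : ℝ), (0 : ℝ)) z)).fderiv
  simp only [add_apply, ContinuousLinearMap.comp_apply,
    zero_apply, map_zero, zero_add, ContinuousLinearMap.flip_apply] at hx hy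
  change fderiv ℝ (fun w => fderiv ℝ f w (0, 1)) z (1, 0) =
    fderiv ℝ (fun w => fderiv ℝ f w (1, 0)) z (0, 1)
  rw [hx, hy, hf.contDiffAt.isSymmSndFDerivAt (by simp)]

end PartialDerivatives

namespace Biperiodic

variable {f g : ℝ × ℝ → ℝ}

theorem add_fst (hf : Biperiodic f) (z : ℝ × ℝ) : f (z + (1, 0)) = f z := by
  obtain ⟨x, y⟩ := z
  simpa using (hf x y).1

theorem add_snd (hf : Biperiodic f) (z : ℝ × ℝ) : f (z + (0, 1)) = f z := by
  obtain ⟨x, y⟩ := z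
  simpa using (hf x y).2

theorem of_add (h₁ : ∀ z, f (z + (1, 0)) = f z) (h₂ : ∀ z, f (z + (0, 1)) = f z) :
    Biperiodic f := fun x y => ⟨by simpa using h₁ (x, y), by simpa using h₂ (x, y)⟩

theorem pdx (hf : Biperiodic f) : Biperiodic (_root_.pdx f) :=
  of_add (fun z => by rw [← pdx_comp_add, funext hf.add_fst])
    (fun z => by rw [← pdx_comp_add, funext hf.add_snd])

theorem pdy (hf : Biperiodic f) : Biperiodic (_root_.pdy f) :=
  of_add (fun z => by rw [← pdy_comp_add, funext hf.add_fst])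
    (fun z => by rw [← pdy_comp_add, funext hf.add_snd])

theorem mul (hf : Biperiodic f) (hg : Biperiodic g) : Biperiodic (fun z => f z * g z) :=
  fun x y => by simp only [(hf x y).1, (hf x y).2, (hg x y).1, (hg x y).2, and_self]

theorem comp_add (hf : Biperiodic f) (w : ℝ × ℝ) : Biperiodic (fun z => f (z + w)) :=
  of_add (fun z => by rw [add_right_comm, hf.add_fst])
    (fun z => by rw [add_right_comm, hf.add_snd])

end Biperiodic

section TorusIntegral

variable {f g : ℝ × ℝ → ℝ}

theorem torusInt_congr (h : ∀ z, f z = g z) : torusInt f = torusInt g :=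
  congrArg torusInt (funext h)

theorem integrableOn_unitSquare (hf : Continuous f) :
    IntegrableOn f (Ioc (0 : ℝ) 1 ×ˢ Ioc (0 : ℝ) 1) :=
  (hf.integrableOn_Icc (a := ((0 : ℝ), (0 : ℝ))) (b := (1, 1))).mono_set <| by
    rw [← Icc_prod_Icc]; exact prod_mono Ioc_subset_Icc_self Ioc_subset_Icc_self

theorem torusInt_eq_setIntegral (hf : Continuous f) :
    torusInt f = ∫ z in Ioc 0 1 ×ˢ Ioc 0 1, f z := by
  rw [Measure.volume_eq_prod, setIntegral_prod _ (integrableOn_unitSquare hf), torusInt]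
  simp only [intervalIntegral.integral_of_le zero_le_one]

theorem torusInt_add (hf : Continuous f) (hg : Continuous g) :
    torusInt (fun z => f z + g z) = torusInt f + torusInt g := by
  rw [torusInt_eq_setIntegral (f := fun z => f z + g z) (hf.add hg), torusInt_eq_setIntegral hf,
    torusInt_eq_setIntegral hg,
    integral_add (integrableOn_unitSquare hf) (integrableOn_unitSquare hg)]

theorem torusInt_sub (hf : Continuous f) (hg : Continuous g) :
    torusInt (fun z => f z - g z) = torusInt f - torusInt g := by
  rw [torusInt_eq_setIntegral (f := fun z => f z - g z) (hf.sub hg), torusInt_eq_setIntegral hf,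
    torusInt_eq_setIntegral hg,
    integral_sub (integrableOn_unitSquare hf) (integrableOn_unitSquare hg)]

theorem torusInt_const_mul (r : ℝ) (f : ℝ × ℝ → ℝ) :
    torusInt (fun z => r * f z) = r * torusInt f := by
  simp only [torusInt, intervalIntegral.integral_const_mul]

theorem torusInt_comp_swap (hf : Continuous f) : torusInt (fun z => f z.swap) = torusInt f := by
  rw [torusInt_eq_setIntegral (f := fun z => f z.swap) (hf.comp continuous_swap),
    torusInt_eq_setIntegral hf, Measure.volume_eq_prod, setIntegral_prod_swap]

theorem torusInt_comp_add (hf : Biperiodic f) (w : ℝ × ℝ) :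
    torusInt (fun z => f (z + w)) = torusInt f := by
  obtain ⟨w₁, w₂⟩ := w
  have hslice (x : ℝ) : ∫ y in (0 : ℝ)..1, f (x, y + w₂) = ∫ y in (0 : ℝ)..1, f (x, y) := by
    have hper : Function.Periodic (fun y => f (x, y)) 1 := fun y => (hf x y).2
    rw [intervalIntegral.integral_comp_add_right (fun y => f (x, y)), zero_add, add_comm,
      hper.intervalIntegral_add_eq w₂ 0, zero_add]
  have hper : Function.Periodic (fun x => ∫ y in (0 : ℝ)..1, f (x, y)) 1 := fun x => by
    simp only [(hf x _).1]
  simp only [torusInt, Prod.mk_add_mk, hslice]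
  rw [intervalIntegral.integral_comp_add_right (fun x => ∫ y in (0 : ℝ)..1, f (x, y)), zero_add,
    add_comm, hper.intervalIntegral_add_eq w₁ 0, zero_add]

theorem continuous_torusInt_param {X : Type*} [TopologicalSpace X] {Φ : X → ℝ × ℝ → ℝ}
    (hΦ : Continuous (Function.uncurry Φ)) : Continuous fun s => torusInt (Φ s) :=
  intervalIntegral.continuous_parametric_intervalIntegral_of_continuous'
    (intervalIntegral.continuous_parametric_intervalIntegral_of_continuous'
      (f := fun q : X × ℝ => fun y => Φ q.1 (q.2, y)) (by fun_prop) 0 1) 0 1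

end TorusIntegral

theorem intervalIntegral_deriv_eq_zero_of_periodic {g g' : ℝ → ℝ} (hg : Function.Periodic g 1)
    (hd : ∀ t, HasDerivAt g (g' t) t) (hg' : Continuous g') : ∫ t in (0 : ℝ)..1, g' t = 0 := by
  rw [intervalIntegral.integral_eq_sub_of_hasDerivAt (fun t _ => hd t)
    (hg'.intervalIntegrable 0 1), sub_eq_zero]
  simpa using hg 0

section Calculus

variable {f g : ℝ × ℝ → ℝ}

theorem torusInt_pdy_eq_zero (hf : ContDiff ℝ 1 f) (hper : Biperiodic f) :
    torusInt (pdy f) = 0 := by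
  have hslice (x : ℝ) : ∫ y in (0 : ℝ)..1, pdy f (x, y) = 0 :=
    intervalIntegral_deriv_eq_zero_of_periodic (fun y => (hper x y).2)
      (fun y => hasDerivAt_pdy (hf.differentiable one_ne_zero _))
      (hf.continuous_pdy.comp (Continuous.prodMk_right x))
  simp only [torusInt, hslice, intervalIntegral.integral_zero]

theorem torusInt_pdx_eq_zero (hf : ContDiff ℝ 1 f) (hper : Biperiodic f) :
    torusInt (pdx f) = 0 := by
  have hslice (y : ℝ) : ∫ x in (0 : ℝ)..1, pdx f (x, y) = 0 :=
    intervalIntegral_deriv_eq_zero_of_periodic (fun x => (hper x y).1)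
      (fun x => hasDerivAt_pdx (hf.differentiable one_ne_zero _))
      (hf.continuous_pdx.comp (Continuous.prodMk_left y))
  rw [← torusInt_comp_swap hf.continuous_pdx]
  simp only [torusInt, Prod.swap_prod_mk, hslice, intervalIntegral.integral_zero]

theorem torusInt_mul_pdx (hf : ContDiff ℝ 1 f) (hg : ContDiff ℝ 1 g) (hfp : Biperiodic f)
    (hgp : Biperiodic g) :
    torusInt (fun z => f z * pdx g z) = -torusInt (fun z => pdx f z * g z) := by
  have hzero := torusInt_pdx_eq_zero (hf.mul hg) (hfp.mul hgp)
  rw [torusInt_congr fun z => pdx_mul (hf.differentiable one_ne_zero z)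
      (hg.differentiable one_ne_zero z),
    torusInt_add (f := fun z => pdx f z * g z) (g := fun z => f z * pdx g z)
      (hf.continuous_pdx.mul hg.continuous) (hf.continuous.mul hg.continuous_pdx)] at hzero
  linarith

end Calculus

section DifferenceQuotient

theorem tendsto_neg_nhdsNE_zero : Tendsto (fun h : ℝ => -h) (𝓝[≠] 0) (𝓝[≠] 0) :=
  tendsto_nhdsWithin_of_tendsto_nhds_of_eventually_within _
    (by simpa using (continuous_neg.tendsto (0 : ℝ)).mono_left nhdsWithin_le_nhds)
    (eventually_nhdsWithin_of_forall fun _ hh => neg_ne_zero.mpr hh)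

variable {G f : ℝ × ℝ → ℝ}

theorem slope_snd_eq_integral_pdy (hG : ContDiff ℝ 1 G) {h : ℝ} (hh : h ≠ 0) (z : ℝ × ℝ) :
    (G (z + (0, h)) - G z) / h = ∫ s in (0 : ℝ)..1, pdy G (z + (0, s * h)) := by
  obtain ⟨x, y⟩ := z
  have hd (s : ℝ) : HasDerivAt (fun s => G (x, y + s * h)) (pdy G (x, y + s * h) * h) s := by
    have hline : HasDerivAt (fun s => y + s * h) h s := by
      simpa using ((hasDerivAt_id s).mul_const h).const_add y
    exact (hasDerivAt_pdy (hG.differentiable one_ne_zero _)).comp s hline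
  have hcont : Continuous fun s => pdy G (x, y + s * h) * h :=
    (hG.continuous_pdy.comp (by fun_prop)).mul continuous_const
  have hftc := intervalIntegral.integral_eq_sub_of_hasDerivAt (fun s _ => hd s)
    (hcont.intervalIntegrable 0 1)
  rw [intervalIntegral.integral_mul_const] at hftc
  simp only [Prod.mk_add_mk, one_mul, zero_mul, add_zero] at hftc ⊢
  rw [← hftc, mul_div_cancel_right₀ _ hh]

theorem tendsto_torusInt_slope_snd_mul (hG : ContDiff ℝ 1 G) (hf : Continuous f) :
    Tendsto (fun h => torusInt (fun z => (G (z + (0, h)) - G z) / h * f z)) (𝓝[≠] 0)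
      (𝓝 (torusInt (fun z => pdy G z * f z))) := by
  -- the difference quotient as an average of `pdy G`, which still makes sense at `h = 0`
  set Φ : ℝ → ℝ × ℝ → ℝ := fun h z => (∫ s in (0 : ℝ)..1, pdy G (z + (0, s * h))) * f z
  have hΦ : Continuous (Function.uncurry Φ) :=
    (intervalIntegral.continuous_parametric_intervalIntegral_of_continuous'
      (f := fun q : ℝ × (ℝ × ℝ) => fun s => pdy G (q.2 + (0, s * q.1)))
      (hG.continuous_pdy.comp (by fun_prop)) 0 1).mul (hf.comp continuous_snd)
  have hΦ0 : torusInt (Φ 0) = torusInt (fun z => pdy G z * f z) := by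
    simp [Φ, Prod.mk_zero_zero]
  have hΦslope : ∀ᶠ h in 𝓝[≠] 0,
      torusInt (Φ h) = torusInt (fun z => (G (z + (0, h)) - G z) / h * f z) :=
    eventually_nhdsWithin_of_forall fun h hh =>
      torusInt_congr fun z => by rw [slope_snd_eq_integral_pdy hG hh]
  rw [← hΦ0]
  exact ((continuous_torusInt_param hΦ).tendsto 0).mono_left nhdsWithin_le_nhds |>.congr' hΦslope

end DifferenceQuotient

section Jacobian

variable {u v : ℝ × ℝ → ℝ}

theorem torusInt_sub_comp_add_mul_pdx (hu : ContDiff ℝ 1 u) (hv : ContDiff ℝ 1 v)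
    (hup : Biperiodic u) (hvp : Biperiodic v) (k : ℝ × ℝ) :
    torusInt (fun z => (v (z + k) - v z) * pdx u z) =
      torusInt (fun z => (u z - u (z - k)) * pdx v z) := by
  set u' : ℝ × ℝ → ℝ := fun z => u (z + -k)
  have hu' : ContDiff ℝ 1 u' := hu.comp (contDiff_id.add contDiff_const)
  have hu'p : Biperiodic u' := hup.comp_add (-k)
  have hu₀ := hu.continuous; have hv₀ := hv.continuous; have hu'₀ := hu'.continuous
  have hux := hu.continuous_pdx; have hvx := hv.continuous_pdx
  calc torusInt (fun z => (v (z + k) - v z) * pdx u z)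
      = torusInt (fun z => v (z + k) * pdx u z) - torusInt (fun z => v z * pdx u z) := by
        rw [torusInt_congr fun z => sub_mul _ _ _, torusInt_sub (by fun_prop) (by fun_prop)]
    _ = torusInt (fun z => v z * pdx u' z) - torusInt (fun z => v z * pdx u z) := by
        rw [← torusInt_comp_add (hvp.mul hu'p.pdx) k]
        simp only [u', pdx_comp_add, add_neg_cancel_right]
    _ = torusInt (fun z => pdx v z * u z) - torusInt (fun z => pdx v z * u' z) := by
        rw [torusInt_mul_pdx hv hu' hvp hu'p, torusInt_mul_pdx hv hu hvp hup]
        ring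
    _ = torusInt (fun z => (u z - u (z - k)) * pdx v z) := by
        rw [← torusInt_sub (by fun_prop) (by fun_prop)]
        exact torusInt_congr fun z => by simp only [u', sub_eq_add_neg]; ring

theorem torusInt_pdx_mul_pdy_eq_pdy_mul_pdx (hu : ContDiff ℝ 1 u) (hv : ContDiff ℝ 1 v)
    (hup : Biperiodic u) (hvp : Biperiodic v) :
    torusInt (fun z => pdx u z * pdy v z) = torusInt (fun z => pdy u z * pdx v z) := by
  have hquot (h : ℝ) : torusInt (fun z => (v (z + (0, h)) - v z) / h * pdx u z) =
      torusInt (fun z => (u (z + (0, -h)) - u z) / -h * pdx v z) := by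
    calc torusInt (fun z => (v (z + (0, h)) - v z) / h * pdx u z)
        = h⁻¹ * torusInt (fun z => (v (z + (0, h)) - v z) * pdx u z) := by
          rw [← torusInt_const_mul]; exact torusInt_congr fun z => by ring
      _ = h⁻¹ * torusInt (fun z => (u z - u (z - (0, h))) * pdx v z) := by
          rw [torusInt_sub_comp_add_mul_pdx hu hv hup hvp]
      _ = torusInt (fun z => (u (z + (0, -h)) - u z) / -h * pdx v z) := by
          rw [← torusInt_const_mul]
          exact torusInt_congr fun z => by rw [sub_eq_add_neg z, Prod.neg_mk, neg_zero]; ring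
  have hlim₁ := tendsto_torusInt_slope_snd_mul hv hu.continuous_pdx
  have hlim₂ :=
    (tendsto_torusInt_slope_snd_mul hu hv.continuous_pdx).comp tendsto_neg_nhdsNE_zero
  rw [torusInt_congr fun z => mul_comm (pdx u z) (pdy v z)]
  exact tendsto_nhds_unique (hlim₁.congr hquot) hlim₂

end Jacobian

section DivergenceForm

variable (a b c l11 l12 l22 m11 m12 m22 : ℝ) (p : ℝ × ℝ → ℝ)

noncomputable def gmaFluxX (z : ℝ × ℝ) : ℝ :=
  b * pdx p z - (a * l22 + b * l11 - 2 * c * l12) * p z - l22 / 2 * pdx p z ^ 2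
    + l11 / 2 * pdy p z ^ 2 - m22 * pdx p z * pdy p z + m12 * pdy p z ^ 2

noncomputable def gmaFluxY (z : ℝ × ℝ) : ℝ :=
  a * pdy p z - 2 * c * pdx p z - (a * m22 + b * m11 - 2 * c * m12) * p z
    - l11 * pdx p z * pdy p z + (l12 + m22 / 2) * pdx p z ^ 2 - m11 / 2 * pdy p z ^ 2

variable {p}

theorem contDiff_gmaFluxX (hp : ContDiff ℝ 2 p) :
    ContDiff ℝ 1 (gmaFluxX a b c l11 l12 l22 m12 m22 p) := by
  have hu : ContDiff ℝ 1 (pdx p) := hp.pdx le_rfl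
  have hv : ContDiff ℝ 1 (pdy p) := hp.pdy le_rfl
  have hp₁ : ContDiff ℝ 1 p := hp.of_le one_le_two
  unfold gmaFluxX; fun_prop

theorem contDiff_gmaFluxY (hp : ContDiff ℝ 2 p) :
    ContDiff ℝ 1 (gmaFluxY a b c l11 l12 m11 m12 m22 p) := by
  have hu : ContDiff ℝ 1 (pdx p) := hp.pdx le_rfl
  have hv : ContDiff ℝ 1 (pdy p) := hp.pdy le_rfl
  have hp₁ : ContDiff ℝ 1 p := hp.of_le one_le_two
  unfold gmaFluxY; fun_prop

theorem biperiodic_gmaFluxX (hp : Biperiodic p) :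
    Biperiodic (gmaFluxX a b c l11 l12 l22 m12 m22 p) := fun x y => by
  simp only [gmaFluxX, (hp x y).1, (hp x y).2, (hp.pdx x y).1, (hp.pdx x y).2, (hp.pdy x y).1,
    (hp.pdy x y).2, and_self]

theorem biperiodic_gmaFluxY (hp : Biperiodic p) :
    Biperiodic (gmaFluxY a b c l11 l12 m11 m12 m22 p) := fun x y => by
  simp only [gmaFluxY, (hp x y).1, (hp x y).2, (hp.pdx x y).1, (hp.pdx x y).2, (hp.pdy x y).1,
    (hp.pdy x y).2, and_self]

theorem gma_sub_eq_hessian_add_divergence (h2 : l11 * l22 - l12 ^ 2 = 0)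
    (h3 : m11 * m22 - m12 ^ 2 = 0) (h4 : l11 * m22 + l22 * m11 - 2 * l12 * m12 = 0)
    (hp : ContDiff ℝ 2 p) (z : ℝ × ℝ) :
    (a + pdx (pdx p) z - l11 * pdx p z - m11 * pdy p z) *
        (b + pdy (pdy p) z - l22 * pdx p z - m22 * pdy p z) -
      (c + pdy (pdx p) z - l12 * pdx p z - m12 * pdy p z) ^ 2 - a * b + c ^ 2 =
      (pdx (pdx p) z * pdy (pdy p) z - pdy (pdx p) z * pdx (pdy p) z) +
        (pdx (gmaFluxX a b c l11 l12 l22 m12 m22 p) z +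
          pdy (gmaFluxY a b c l11 l12 m11 m12 m22 p) z) := by
  have hp' : Differentiable ℝ p := hp.differentiable two_ne_zero
  have hu : Differentiable ℝ (pdx p) := (hp.pdx (m := 1) le_rfl).differentiable one_ne_zero
  have hv : Differentiable ℝ (pdy p) := (hp.pdy (m := 1) le_rfl).differentiable one_ne_zero
  obtain ⟨x, y⟩ := z
  have ux := hasDerivAt_pdx (hu (x, y)); have vx := hasDerivAt_pdx (hv (x, y))
  have uy := hasDerivAt_pdy (hu (x, y)); have vy := hasDerivAt_pdy (hv (x, y))
  have hX := pdx_eq_of_hasDerivAt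
    ((contDiff_gmaFluxX a b c l11 l12 l22 m12 m22 hp).differentiable one_ne_zero (x, y))
    ((((((ux.const_mul b).fun_sub ((hasDerivAt_pdx (hp' (x, y))).const_mul
      (a * l22 + b * l11 - 2 * c * l12))).fun_sub ((ux.fun_pow 2).const_mul (l22 / 2))).fun_add
      ((vx.fun_pow 2).const_mul (l11 / 2))).fun_sub ((ux.const_mul m22).fun_mul vx)).fun_add
      ((vx.fun_pow 2).const_mul m12))
  have hY := pdy_eq_of_hasDerivAt
    ((contDiff_gmaFluxY a b c l11 l12 m11 m12 m22 hp).differentiable one_ne_zero (x, y))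
    ((((((vy.const_mul a).fun_sub (uy.const_mul (2 * c))).fun_sub
      ((hasDerivAt_pdy (hp' (x, y))).const_mul (a * m22 + b * m11 - 2 * c * m12))).fun_sub
      ((uy.const_mul l11).fun_mul vy)).fun_add ((uy.fun_pow 2).const_mul (l12 + m22 / 2))).fun_sub
      ((vy.fun_pow 2).const_mul (m11 / 2)))
  rw [hX, hY, pdx_pdy_comm hp]
  linear_combination pdx p (x, y) ^ 2 * h2 + pdy p (x, y) ^ 2 * h3 +
    pdx p (x, y) * pdy p (x, y) * h4

end DivergenceForm

theorem gma_normalization_necessary_general (a b c l11 l12 l22 m11 m12 m22 : ℝ)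
    (h2 : l11 * l22 - l12 ^ 2 = 0)
    (h3 : m11 * m22 - m12 ^ 2 = 0)
    (h4 : l11 * m22 + l22 * m11 - 2 * l12 * m12 = 0)
    (F : ℝ × ℝ → ℝ)
    (p : ℝ × ℝ → ℝ) (hp : ContDiff ℝ 2 p) (hper : Biperiodic p)
    (heq : ∀ z : ℝ × ℝ,
      (a + pdx (pdx p) z - l11 * pdx p z - m11 * pdy p z) *
          (b + pdy (pdy p) z - l22 * pdx p z - m22 * pdy p z) -
        (c + pdy (pdx p) z - l12 * pdx p z - m12 * pdy p z) ^ 2 = Real.exp (F z)) :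
    torusInt (fun z => Real.exp (F z) - a * b + c ^ 2) = 0 := by
  have hu : ContDiff ℝ 1 (pdx p) := hp.pdx le_rfl
  have hv : ContDiff ℝ 1 (pdy p) := hp.pdy le_rfl
  have hP := contDiff_gmaFluxX a b c l11 l12 l22 m12 m22 hp
  have hQ := contDiff_gmaFluxY a b c l11 l12 m11 m12 m22 hp
  have hux := hu.continuous_pdx; have huy := hu.continuous_pdy
  have hvx := hv.continuous_pdx; have hvy := hv.continuous_pdy
  have hPx := hP.continuous_pdx; have hQy := hQ.continuous_pdy
  rw [torusInt_congr fun z => (congrArg (· - a * b + c ^ 2) (heq z)).symm.trans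
      (gma_sub_eq_hessian_add_divergence a b c l11 l12 l22 m11 m12 m22 h2 h3 h4 hp z),
    torusInt_add (by fun_prop) (by fun_prop), torusInt_sub (by fun_prop) (by fun_prop),
    torusInt_add hPx hQy, torusInt_pdx_mul_pdy_eq_pdy_mul_pdx hu hv hper.pdx hper.pdy,
    torusInt_pdx_eq_zero hP (biperiodic_gmaFluxX a b c l11 l12 l22 m12 m22 hper),
    torusInt_pdy_eq_zero hQ (biperiodic_gmaFluxY a b c l11 l12 m11 m12 m22 hper)]
  ring

/-- The normalization `∫ (e^F - ab + c²) = 0` is necessary for solvability of the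
generalized Monge–Ampère equation on the 2-torus. -/
theorem gma_normalization_necessary (a b c l11 l12 l22 m11 m12 m22 : ℝ)
    (hpd : (!![a, c; c, b]).PosDef)
    (h1 : m11 * l22 = 0)
    (h2 : l11 * l22 - l12 ^ 2 = 0)
    (h3 : m11 * m22 - m12 ^ 2 = 0)
    (h4 : l11 * m22 + l22 * m11 - 2 * l12 * m12 = 0)
    (F : ℝ × ℝ → ℝ) (hF : ContDiff ℝ (⊤ : ℕ∞) F) (hFper : Biperiodic F)
    (p : ℝ × ℝ → ℝ) (hp : ContDiff ℝ 2 p) (hper : Biperiodic p)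
    (heq : ∀ z : ℝ × ℝ,
      (a + pdx (pdx p) z - l11 * pdx p z - m11 * pdy p z) *
          (b + pdy (pdy p) z - l22 * pdx p z - m22 * pdy p z) -
        (c + pdy (pdx p) z - l12 * pdx p z - m12 * pdy p z) ^ 2 = Real.exp (F z)) :
    torusInt (fun z => Real.exp (F z) - a * b + c ^ 2) = 0 :=
  gma_normalization_necessary_general a b c l11 l12 l22 m11 m12 m22 h2 h3 h4 F p hp hper heq
end

section
/- Let f : ℝ → ℝ be a twice continuously differentiable 1-periodic function, and let α, β ∈ ℝ satisfy f''(s) + α f'(s) ≥ β for all s ∈ ℝ. Then |f'(s)| ≤ 2|β| e^{2|α|} for all s ∈ ℝ. -/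
/-!
Put `g = f'`. Rolle's theorem on `[s - 1, s]` and periodicity give zeros `c < s < c + 1` of `g`.
Multiplying by the integrating factor `e^{αu}`, the inequality `g' + α g ≥ β` says that
`(e^{αu} g u)' ≥ β e^{αu} ≥ -|β| e^{|α|} e^{αs}` for `|u - s| ≤ 1`, so adding the linear term
`|β| e^{|α|} e^{αs} u` makes `e^{αu} g u` monotone near `s`. Comparing its values at `s` and at the
two zeros bounds `g s` from below and above by `|β| e^{|α|}`.
-/

open Real Set

section IntegratingFactor

variable {g : ℝ → ℝ} {α β : ℝ}

theorem exp_mul_le_exp_abs_add_mul {u s : ℝ} (hus : |u - s| ≤ 1) :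
    exp (α * u) ≤ exp (|α| + α * s) := by
  have : α * (u - s) ≤ |α| :=
    calc α * (u - s) ≤ |α| * |u - s| := by rw [← abs_mul]; exact le_abs_self _
      _ ≤ |α| := mul_le_of_le_one_right (abs_nonneg α) hus
  exact exp_le_exp.mpr (by linarith)

theorem monotoneOn_exp_mul_mul_add (hg : Differentiable ℝ g)
    (h : ∀ u, β ≤ deriv g u + α * g u) (s : ℝ) :
    MonotoneOn (fun u => exp (α * u) * g u + |β| * exp (|α| + α * s) * u)
      (Icc (s - 1) (s + 1)) := by
  have hderiv : ∀ u, HasDerivAt (fun u => exp (α * u) * g u + |β| * exp (|α| + α * s) * u)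
      (exp (α * u) * (deriv g u + α * g u) + |β| * exp (|α| + α * s)) u := by
    intro u
    have hexp : HasDerivAt (fun u => exp (α * u)) (exp (α * u) * α) u := by
      simpa using ((hasDerivAt_id u).const_mul α).exp
    exact ((hexp.mul (hg u).hasDerivAt).add
      ((hasDerivAt_id' u).const_mul (|β| * exp (|α| + α * s)))).congr_deriv (by ring)
  refine monotoneOn_of_deriv_nonneg (convex_Icc _ _)
    (fun u _ => (hderiv u).continuousAt.continuousWithinAt)
    (fun u _ => (hderiv u).differentiableAt.differentiableWithinAt) fun u hu => ?_
  rw [interior_Icc] at hu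
  have hus : |u - s| ≤ 1 := abs_sub_le_iff.mpr ⟨by linarith [hu.2], by linarith [hu.1]⟩
  rw [(hderiv u).deriv]
  calc (0 : ℝ) ≤ exp (α * u) * (β + |β|) :=
        mul_nonneg (exp_pos _).le (by linarith [neg_abs_le β])
    _ = exp (α * u) * β + |β| * exp (α * u) := by ring
    _ ≤ exp (α * u) * (deriv g u + α * g u) + |β| * exp (|α| + α * s) :=
        add_le_add (mul_le_mul_of_nonneg_left (h u) (exp_pos _).le)
          (mul_le_mul_of_nonneg_left (exp_mul_le_exp_abs_add_mul hus) (abs_nonneg β))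

theorem neg_le_of_deriv_add_mul_ge (hg : Differentiable ℝ g)
    (h : ∀ u, β ≤ deriv g u + α * g u) {a s : ℝ} (ha : g a = 0) (has : a ≤ s)
    (hsa : s ≤ a + 1) : -(|β| * exp |α|) ≤ g s := by
  have hmono := monotoneOn_exp_mul_mul_add hg h s
    ⟨by linarith, by linarith⟩ ⟨by linarith, by linarith⟩ has
  simp only [ha, mul_zero, zero_add] at hmono
  have hK : |β| * exp (|α| + α * s) * (s - a) ≤ |β| * exp |α| * exp (α * s) := by
    rw [exp_add, ← mul_assoc]
    exact mul_le_of_le_one_right (by positivity) (by linarith)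
  have : -(|β| * exp |α|) * exp (α * s) ≤ g s * exp (α * s) := by linarith
  exact le_of_mul_le_mul_right this (exp_pos _)

theorem le_of_deriv_add_mul_ge (hg : Differentiable ℝ g)
    (h : ∀ u, β ≤ deriv g u + α * g u) {b s : ℝ} (hb : g b = 0) (hbs : b - 1 ≤ s)
    (hsb : s ≤ b) : g s ≤ |β| * exp |α| := by
  have hmono := monotoneOn_exp_mul_mul_add hg h s
    ⟨by linarith, by linarith⟩ ⟨by linarith, by linarith⟩ hsb
  simp only [hb, mul_zero, zero_add] at hmono
  have hK : |β| * exp (|α| + α * s) * (b - s) ≤ |β| * exp |α| * exp (α * s) := by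
    rw [exp_add, ← mul_assoc]
    exact mul_le_of_le_one_right (by positivity) (by linarith)
  have : g s * exp (α * s) ≤ |β| * exp |α| * exp (α * s) := by linarith
  exact le_of_mul_le_mul_right this (exp_pos _)

theorem abs_le_of_deriv_add_mul_ge (hg : Differentiable ℝ g)
    (h : ∀ u, β ≤ deriv g u + α * g u) {a s : ℝ} (ha : g a = 0) (ha₁ : g (a + 1) = 0)
    (hs : s ∈ Icc a (a + 1)) : |g s| ≤ |β| * exp |α| :=
  abs_le.mpr ⟨neg_le_of_deriv_add_mul_ge hg h ha hs.1 hs.2,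
    le_of_deriv_add_mul_ge hg h ha₁ (by linarith [hs.1]) hs.2⟩

end IntegratingFactor

theorem deriv_periodic_of_periodic {f : ℝ → ℝ} {p : ℝ} (hf : Function.Periodic f p) :
    Function.Periodic (deriv f) p := fun x => by
  rw [← deriv_comp_add_const, funext hf]

/-- A periodic function whose derivative satisfies a linear differential inequality
`f'' + α f' ≥ β` has its derivative bounded by `2|β| e^{2|α|}`. -/
theorem periodic_gradient_estimate (f : ℝ → ℝ) (hf : ContDiff ℝ 2 f)
    (hper : ∀ s : ℝ, f (s + 1) = f s) (α β : ℝ)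
    (h : ∀ s : ℝ, deriv (deriv f) s + α * deriv f s ≥ β) :
    ∀ s : ℝ, |deriv f s| ≤ 2 * |β| * Real.exp (2 * |α|) := by
  intro s
  have hf' : ContDiff ℝ 1 (deriv f) := hf.iterate_deriv' 1 1
  obtain ⟨c, hc, hfc⟩ := exists_deriv_eq_zero (by linarith : s - 1 < s)
    hf.continuous.continuousOn (by simpa using (hper (s - 1)).symm)
  have hfc₁ : deriv f (c + 1) = 0 := (deriv_periodic_of_periodic hper c).trans hfc
  calc |deriv f s| ≤ |β| * exp |α| :=
        abs_le_of_deriv_add_mul_ge (hf'.differentiable one_ne_zero) h hfc hfc₁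
          ⟨hc.2.le, by linarith [hc.1]⟩
    _ ≤ 2 * |β| * exp (2 * |α|) := by
        have hexp : exp |α| ≤ exp (2 * |α|) := exp_le_exp.mpr (by linarith [abs_nonneg α])
        linarith [mul_le_mul_of_nonneg_left hexp (abs_nonneg β),
          mul_nonneg (abs_nonneg β) (exp_pos (2 * |α|)).le]
end

section
/- Let q : ℝ² → ℝ be a smooth biperiodic function with ∫_{𝕋²} q = 0. Then there exist smooth biperiodic functions a₁, a₂ : ℝ² → ℝ such that ∂a₂/∂x − ∂a₁/∂y = q at every point of ℝ². -/
open MeasureTheory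

/-!
With `Q x = ∫₀¹ q (x, t) dt`, take `a₂ (x, y) = ∫₀ˣ Q` and `a₁ (x, y) = ∫₀ʸ (Q x - q (x, t)) dt`,
so that `∂ₓa₂ - ∂ᵧa₁ = Q - (Q - q) = q`. Both are periodic because their integrands have zero
mean over a period: `∫₀¹ (Q x - q (x, t)) dt = 0` by the choice of `Q`, and `∫₀¹ Q = ∫_{𝕋²} q = 0`.
Smoothness comes from differentiating under the integral sign; the variable upper limit is
handled by the substitution `t = y s`.
-/

open intervalIntegral Set Topology
open scoped Interval

universe u

section ParametricIntegral

-- One universe for `E` and `F`, so that the induction below can pass to `E →L[ℝ] F`.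
variable {E F : Type u} [NormedAddCommGroup E] [NormedSpace ℝ E]
  [NormedAddCommGroup F] [NormedSpace ℝ F]

theorem hasFDerivAt_parametric_intervalIntegral_of_contDiff {f : E × ℝ → F}
    (hf : ContDiff ℝ 1 f) (a b : ℝ) (z₀ : E) :
    HasFDerivAt (fun z => ∫ t in a..b, f (z, t))
      (∫ t in a..b, fderiv ℝ f (z₀, t) ∘L ContinuousLinearMap.inl ℝ E ℝ) z₀ := by
  have hf' : Continuous fun p => fderiv ℝ f p ∘L ContinuousLinearMap.inl ℝ E ℝ :=
    (hf.continuous_fderiv one_ne_zero).clm_comp continuous_const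
  obtain ⟨C, hC⟩ := (isCompact_uIcc (a := a) (b := b)).exists_bound_of_continuousOn
    (hf'.comp (.prodMk_right z₀)).continuousOn
  have hbounded : ∀ᶠ z in 𝓝 z₀, ∀ t ∈ [[a, b]],
      ‖fderiv ℝ f (z, t) ∘L ContinuousLinearMap.inl ℝ E ℝ‖ < C + 1 :=
    isCompact_uIcc.eventually_forall_of_forall_eventually fun t ht =>
      hf'.continuousAt.norm.eventually_lt continuousAt_const ((hC t ht).trans_lt (lt_add_one C))
  refine hasFDerivAt_integral_of_dominated_of_fderiv_le (bound := fun _ => C + 1)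
    (F' := fun z t => fderiv ℝ f (z, t) ∘L ContinuousLinearMap.inl ℝ E ℝ) hbounded
    (.of_forall fun z => (hf.continuous.comp (.prodMk_right z)).aestronglyMeasurable)
    ((hf.continuous.comp (.prodMk_right z₀)).intervalIntegrable _ _)
    (hf'.comp (.prodMk_right z₀)).aestronglyMeasurable
    (.of_forall fun t ht z hz => (hz t (uIoc_subset_uIcc ht)).le)
    intervalIntegrable_const
    (.of_forall fun t _ z _ => ?_)
  exact ((hf.differentiable one_ne_zero (z, t)).hasFDerivAt).comp z (hasFDerivAt_prodMk_left z t)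

theorem contDiff_parametric_intervalIntegral_of_contDiff_nat {n : ℕ} {f : E × ℝ → F}
    (hf : ContDiff ℝ n f) (a b : ℝ) : ContDiff ℝ n fun z => ∫ t in a..b, f (z, t) := by
  induction n generalizing F with
  | zero =>
    rw [Nat.cast_zero, contDiff_zero] at *
    exact continuous_parametric_intervalIntegral_of_continuous' (f := fun z t => f (z, t)) hf a b
  | succ n ih =>
    have hf₁ : ContDiff ℝ 1 f := hf.of_le (by exact_mod_cast Nat.le_add_left 1 n)
    have hderiv := hasFDerivAt_parametric_intervalIntegral_of_contDiff hf₁ a b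
    rw [Nat.cast_succ, contDiff_succ_iff_fderiv] at hf ⊢
    refine ⟨fun z => (hderiv z).differentiableAt, by simp, ?_⟩
    rw [funext fun z => (hderiv z).fderiv]
    exact ih (hf.2.2.clm_comp contDiff_const)

theorem contDiff_parametric_intervalIntegral_of_contDiff {n : ℕ∞} {f : E × ℝ → F}
    (hf : ContDiff ℝ n f) (a b : ℝ) : ContDiff ℝ n fun z => ∫ t in a..b, f (z, t) := by
  induction n with
  | top => exact contDiff_infty.2 fun n =>
      contDiff_parametric_intervalIntegral_of_contDiff_nat (hf.of_le (by exact_mod_cast le_top)) a b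
  | coe n => exact contDiff_parametric_intervalIntegral_of_contDiff_nat hf a b

theorem contDiff_parametric_primitive_of_contDiff {n : ℕ∞} {f : E × ℝ → F}
    (hf : ContDiff ℝ n f) : ContDiff ℝ n fun p : E × ℝ => ∫ t in (0 : ℝ)..p.2, f (p.1, t) := by
  have hrescale : (fun p : E × ℝ => ∫ t in (0 : ℝ)..p.2, f (p.1, t)) =
      fun p => p.2 • ∫ s in (0 : ℝ)..1, f (p.1, p.2 * s) := by
    ext p
    simp [smul_integral_comp_mul_left fun t => f (p.1, t)]
  rw [hrescale]
  exact contDiff_snd.smul (contDiff_parametric_intervalIntegral_of_contDiff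
    (hf.comp (contDiff_fst.fst.prodMk (contDiff_fst.snd.mul contDiff_snd))) 0 1)

end ParametricIntegral

theorem pdx_eq_deriv {p : ℝ × ℝ → ℝ} {x y : ℝ} (hp : DifferentiableAt ℝ p (x, y)) :
    pdx p (x, y) = deriv (fun s => p (s, y)) x :=
  (hp.hasFDerivAt.comp_hasDerivAt x ((hasDerivAt_id x).prodMk (hasDerivAt_const x y))).deriv.symm

theorem pdy_eq_deriv {p : ℝ × ℝ → ℝ} {x y : ℝ} (hp : DifferentiableAt ℝ p (x, y)) :
    pdy p (x, y) = deriv (fun t => p (x, t)) y :=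
  (hp.hasFDerivAt.comp_hasDerivAt y ((hasDerivAt_const y x).prodMk (hasDerivAt_id y))).deriv.symm

section Potential

variable {q : ℝ × ℝ → ℝ}

noncomputable def verticalMean (q : ℝ × ℝ → ℝ) (x : ℝ) : ℝ := ∫ t in (0 : ℝ)..1, q (x, t)

noncomputable def verticalPrimitive (q : ℝ × ℝ → ℝ) (z : ℝ × ℝ) : ℝ :=
  ∫ t in (0 : ℝ)..z.2, q (z.1, t)

noncomputable def potentialFst (q : ℝ × ℝ → ℝ) (z : ℝ × ℝ) : ℝ :=
  z.2 * verticalMean q z.1 - verticalPrimitive q z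

noncomputable def potentialSnd (q : ℝ × ℝ → ℝ) (z : ℝ × ℝ) : ℝ :=
  ∫ s in (0 : ℝ)..z.1, verticalMean q s

theorem continuous_verticalMean (hq : Continuous q) : Continuous (verticalMean q) :=
  continuous_parametric_intervalIntegral_of_continuous' (f := fun x t => q (x, t)) hq 0 1

theorem contDiff_verticalMean {n : ℕ∞} (hq : ContDiff ℝ n q) : ContDiff ℝ n (verticalMean q) :=
  contDiff_parametric_intervalIntegral_of_contDiff hq 0 1

theorem contDiff_potentialFst {n : ℕ∞} (hq : ContDiff ℝ n q) : ContDiff ℝ n (potentialFst q) :=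
  (contDiff_snd.mul ((contDiff_verticalMean hq).comp contDiff_fst)).sub
    (contDiff_parametric_primitive_of_contDiff hq)

theorem contDiff_potentialSnd {n : ℕ∞} (hq : ContDiff ℝ n q) : ContDiff ℝ n (potentialSnd q) :=
  (contDiff_parametric_primitive_of_contDiff (f := fun p : ℝ × ℝ => verticalMean q p.2)
    ((contDiff_verticalMean hq).comp contDiff_snd)).comp (contDiff_snd.prodMk contDiff_fst)

theorem Biperiodic.periodic_verticalMean (hper : Biperiodic q) :
    Function.Periodic (verticalMean q) 1 :=
  fun x => integral_congr fun t _ => (hper x t).1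

theorem Biperiodic.verticalPrimitive_add_one_fst (hper : Biperiodic q) (x y : ℝ) :
    verticalPrimitive q (x + 1, y) = verticalPrimitive q (x, y) :=
  integral_congr fun t _ => (hper x t).1

theorem Biperiodic.verticalPrimitive_add_one_snd (hq : Continuous q) (hper : Biperiodic q)
    (x y : ℝ) : verticalPrimitive q (x, y + 1) = verticalPrimitive q (x, y) + verticalMean q x := by
  have hperiodic : Function.Periodic (fun t => q (x, t)) 1 := fun t => (hper x t).2
  have hsplit := hperiodic.intervalIntegral_add_eq_add 0 y
    fun _ _ => (hq.comp (.prodMk_right x)).intervalIntegrable _ _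
  rwa [zero_add] at hsplit

theorem biperiodic_potentialFst (hq : Continuous q) (hper : Biperiodic q) :
    Biperiodic (potentialFst q) := by
  intro x y
  simp only [potentialFst, hper.periodic_verticalMean x, hper.verticalPrimitive_add_one_fst,
    hper.verticalPrimitive_add_one_snd hq]
  exact ⟨trivial, by ring⟩

theorem biperiodic_potentialSnd (hq : Continuous q) (hper : Biperiodic q) (hint : torusInt q = 0) :
    Biperiodic (potentialSnd q) := by
  refine fun x y => ⟨?_, rfl⟩
  have hmean : ∫ s in (0 : ℝ)..1, verticalMean q s = 0 := hint
  have hsplit := hper.periodic_verticalMean.intervalIntegral_add_eq_add 0 x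
    fun _ _ => (continuous_verticalMean hq).intervalIntegrable _ _
  rw [zero_add, hmean, add_zero] at hsplit
  exact hsplit

theorem pdx_potentialSnd (hq : ContDiff ℝ 1 q) (x y : ℝ) :
    pdx (potentialSnd q) (x, y) = verticalMean q x := by
  rw [pdx_eq_deriv ((contDiff_potentialSnd hq).differentiable one_ne_zero _)]
  exact (continuous_verticalMean hq.continuous).deriv_integral _ 0 x

theorem pdy_potentialFst (hq : ContDiff ℝ 1 q) (x y : ℝ) :
    pdy (potentialFst q) (x, y) = verticalMean q x - q (x, y) := by
  rw [pdy_eq_deriv ((contDiff_potentialFst hq).differentiable one_ne_zero _)]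
  have hprimitive : HasDerivAt (fun t => verticalPrimitive q (x, t)) (q (x, y)) y :=
    ((hq.continuous.comp (.prodMk_right x)).integral_hasStrictDerivAt 0 y).hasDerivAt
  exact ((hasDerivAt_mul_const (verticalMean q x)).sub hprimitive).deriv

end Potential

/-- A smooth biperiodic function with zero average on the 2-torus can be written as
`∂a₂/∂x - ∂a₁/∂y` with `a₁, a₂` smooth and biperiodic. -/
theorem exact_two_form_on_torus (q : ℝ × ℝ → ℝ)
    (hq : ContDiff ℝ (⊤ : ℕ∞) q) (hper : Biperiodic q)
    (hint : torusInt q = 0) :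
    ∃ a₁ a₂ : ℝ × ℝ → ℝ, ContDiff ℝ (⊤ : ℕ∞) a₁ ∧ Biperiodic a₁ ∧
      ContDiff ℝ (⊤ : ℕ∞) a₂ ∧ Biperiodic a₂ ∧
      ∀ z : ℝ × ℝ, pdx a₂ z - pdy a₁ z = q z := by
  have hq₁ : ContDiff ℝ 1 q := hq.of_le (by exact_mod_cast le_top)
  refine ⟨potentialFst q, potentialSnd q, contDiff_potentialFst hq,
    biperiodic_potentialFst hq.continuous hper, contDiff_potentialSnd hq,
    biperiodic_potentialSnd hq.continuous hper hint, ?_⟩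
  rintro ⟨x, y⟩
  rw [pdx_potentialSnd hq₁, pdy_potentialFst hq₁]
  ring
end

section
/- Let A, B, C, m be real numbers with A > 0 and B ≠ 0, let p : ℝ² → ℝ be a smooth function of the variables (t,z), and define a₃ = (B/A)p_z − (m/A)p and a₄ = p_t + (C/A)p_z. Then at every point of ℝ²: (i) m·a₄ + A·(a₃)_t + C·(a₃)_z − B·(a₄)_z = 0; and (ii) (1 + A·(a₄)_t + C·(a₄)_z)(1 + B·(a₃)_z) − (B·(a₄)_z)² = B²·[ ( (B²+C²)/(A B²) + p_tt − (m C²/(A² B)) p_z )·( A/B² + p_zz − (m/B) p_z ) − ( −C/B² + p_tz + (m C/(A B)) p_z )² ]. -/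
/-- Partial derivative in the first variable `t`. -/
noncomputable def pdt (p : ℝ × ℝ → ℝ) (w : ℝ × ℝ) : ℝ := fderiv ℝ p w (1, 0)

/-- Partial derivative in the second variable `z`. -/
noncomputable def pdz (p : ℝ × ℝ → ℝ) (w : ℝ × ℝ) : ℝ := fderiv ℝ p w (0, 1)

section DirectionalDerivative

variable {𝕜 E F : Type*} [RCLike 𝕜] [NormedAddCommGroup E] [NormedSpace 𝕜 E]
  [NormedAddCommGroup F] [NormedSpace 𝕜 F]

theorem fderiv_const_mul_sub_const_mul_apply {f g : E → 𝕜} {x : E}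
    (hf : DifferentiableAt 𝕜 f x) (hg : DifferentiableAt 𝕜 g x) (c d : 𝕜) (v : E) :
    fderiv 𝕜 (fun y => c * f y - d * g y) x v = c * fderiv 𝕜 f x v - d * fderiv 𝕜 g x v := by
  rw [fderiv_fun_sub (hf.const_mul c) (hg.const_mul d), fderiv_const_mul hf, fderiv_const_mul hg]
  simp

theorem fderiv_add_const_mul_apply {f g : E → 𝕜} {x : E}
    (hf : DifferentiableAt 𝕜 f x) (hg : DifferentiableAt 𝕜 g x) (c : 𝕜) (v : E) :
    fderiv 𝕜 (fun y => f y + c * g y) x v = fderiv 𝕜 f x v + c * fderiv 𝕜 g x v := by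
  rw [fderiv_fun_add hf (hg.const_mul c), fderiv_const_mul hg]
  simp

theorem differentiable_fderiv_apply {f : E → F} (hf : ContDiff 𝕜 2 f) (v : E) :
    Differentiable 𝕜 (fun y => fderiv 𝕜 f y v) :=
  ((hf.fderiv_right one_add_one_eq_two.le).clm_apply contDiff_const).differentiable one_ne_zero

theorem fderiv_fderiv_apply_comm {f : E → F} {x : E} (hf : ContDiffAt 𝕜 2 f x) (u v : E) :
    fderiv 𝕜 (fun y => fderiv 𝕜 f y u) x v = fderiv 𝕜 (fun y => fderiv 𝕜 f y v) x u := by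
  have hdf : DifferentiableAt 𝕜 (fderiv 𝕜 f) x :=
    (hf.fderiv_right one_add_one_eq_two.le).differentiableAt one_ne_zero
  rw [fderiv_clm_apply hdf (differentiableAt_const u),
    fderiv_clm_apply hdf (differentiableAt_const v)]
  simpa using hf.isSymmSndFDerivAt (by simp) v u

end DirectionalDerivative

/-- Under the substitution `a₃ = (B/A)p_z - (m/A)p`, `a₄ = p_t + (C/A)p_z`, the linear
constraint holds identically, and the Calabi–Yau volume expression reduces to a
generalized Monge–Ampère expression in `p` on the 2-torus base. -/
theorem calabi_yau_reduction (A B C m : ℝ) (hA : 0 < A) (hB : B ≠ 0)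
    (p : ℝ × ℝ → ℝ) (hp : ContDiff ℝ (⊤ : ℕ∞) p)
    (a₃ a₄ : ℝ × ℝ → ℝ)
    (ha₃ : a₃ = fun w => (B / A) * pdz p w - (m / A) * p w)
    (ha₄ : a₄ = fun w => pdt p w + (C / A) * pdz p w) :
    ∀ w : ℝ × ℝ,
      (m * a₄ w + A * pdt a₃ w + C * pdz a₃ w - B * pdz a₄ w = 0) ∧
      ((1 + A * pdt a₄ w + C * pdz a₄ w) * (1 + B * pdz a₃ w) - (B * pdz a₄ w) ^ 2
        = B ^ 2 *
          (((B ^ 2 + C ^ 2) / (A * B ^ 2) + pdt (pdt p) w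
              - (m * C ^ 2 / (A ^ 2 * B)) * pdz p w) *
            (A / B ^ 2 + pdz (pdz p) w - (m / B) * pdz p w) -
          (-(C / B ^ 2) + pdz (pdt p) w + (m * C / (A * B)) * pdz p w) ^ 2)) := by
  intro w
  have hp2 : ContDiff ℝ 2 p := hp.of_le (WithTop.coe_le_coe.mpr le_top)
  have hp_w : DifferentiableAt ℝ p w := hp2.differentiable two_ne_zero w
  have hpt_w : DifferentiableAt ℝ (pdt p) w := differentiable_fderiv_apply hp2 _ w
  have hpz_w : DifferentiableAt ℝ (pdz p) w := differentiable_fderiv_apply hp2 _ w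
  have a₃_t : pdt a₃ w = B / A * pdt (pdz p) w - m / A * pdt p w := by
    subst ha₃; exact fderiv_const_mul_sub_const_mul_apply hpz_w hp_w _ _ _
  have a₃_z : pdz a₃ w = B / A * pdz (pdz p) w - m / A * pdz p w := by
    subst ha₃; exact fderiv_const_mul_sub_const_mul_apply hpz_w hp_w _ _ _
  have a₄_t : pdt a₄ w = pdt (pdt p) w + C / A * pdt (pdz p) w := by
    subst ha₄; exact fderiv_add_const_mul_apply hpt_w hpz_w _ _
  have a₄_z : pdz a₄ w = pdz (pdt p) w + C / A * pdz (pdz p) w := by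
    subst ha₄; exact fderiv_add_const_mul_apply hpt_w hpz_w _ _
  have p_tz : pdt (pdz p) w = pdz (pdt p) w := fderiv_fderiv_apply_comm hp2.contDiffAt _ _
  rw [a₃_t, a₃_z, a₄_t, a₄_z, p_tz, ha₄]
  have hA₀ : A ≠ 0 := hA.ne'
  constructor <;> (field_simp; ring)
end

section
/- Fix λ ∈ ℝ. Let V = ℝ⁴ with the Chevalley–Eilenberg differential determined by de¹ = 0, de² = λ e¹∧e³, de³ = 0, de⁴ = e¹∧e². Let g be an inner product on V, let J : V → V be a linear map with J∘J = −id and g(JX, JY) = g(X, Y) for all X, Y ∈ V, and let Ω be the 2-form Ω(X,Y) = g(JX, Y). Assume dΩ = 0 and Ω ∧ e¹ ∧ e³ = 0. Then there exists a g-orthonormal basis (f¹, f², f³, f⁴) of V* such that Ω = f¹∧f⁴ + f²∧f³, f¹ ∈ span{e¹}, f² ∈ span{e¹, e³}, and f³ ∈ span{e¹, e³, e²}. -/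
/-- The basis covectors `e¹, …, e⁴` of `V*`, viewed as degree-one elements of the
exterior algebra `Λ(V*)`; an element of `Fin 4 → ℝ` is the coefficient vector of a
covector with respect to the basis `e¹, …, e⁴`. -/
noncomputable def E (i : Fin 4) : ExteriorAlgebra ℝ (Fin 4 → ℝ) :=
  ExteriorAlgebra.ι ℝ (Pi.single i 1)

/-- The Chevalley–Eilenberg differential on basis covectors:
`de¹ = 0`, `de² = λ e¹∧e³`, `de³ = 0`, `de⁴ = e¹∧e²`. -/
noncomputable def dE (lam : ℝ) : Fin 4 → ExteriorAlgebra ℝ (Fin 4 → ℝ)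
  | 0 => 0
  | 1 => lam • (E 0 * E 2)
  | 2 => 0
  | 3 => E 0 * E 1

/-- The 2-form `∑_{i<j} c i j e^i ∧ e^j` with coefficients `c`. -/
noncomputable def twoForm (c : Fin 4 → Fin 4 → ℝ) : ExteriorAlgebra ℝ (Fin 4 → ℝ) :=
  ∑ i : Fin 4, ∑ j ∈ Finset.univ.filter (fun j => i < j), c i j • (E i * E j)

/-- The Chevalley–Eilenberg differential of the 2-form `∑_{i<j} c i j e^i ∧ e^j`,
extended from degree one by the Leibniz rule `d(α∧β) = dα∧β - α∧dβ`. -/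
noncomputable def dTwoForm (lam : ℝ) (c : Fin 4 → Fin 4 → ℝ) :
    ExteriorAlgebra ℝ (Fin 4 → ℝ) :=
  ∑ i : Fin 4, ∑ j ∈ Finset.univ.filter (fun j => i < j),
    c i j • (dE lam i * E j - E i * dE lam j)

/-!
Write `cᵢⱼ = Ω(eᵢ, eⱼ)`. Expanding in the basis of `Λ(V*)`, `Ω ∧ e¹ ∧ e³ = -c₂₄ e¹∧e²∧e³∧e⁴`, and
`dΩ = λ c₂₄ e¹∧e³∧e⁴ - c₃₄ e¹∧e²∧e³`, so the hypotheses give `c₂₄ = c₃₄ = 0`. Hence `Je₄` is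
`g`-orthogonal to `e₂, e₃, e₄`; let `v₁` be its normalization, so that `g(v₁, ·) ∈ ⟨e¹⟩` and
`Jv₁ ∈ ⟨e₄⟩`. Pick a unit `v₂` orthogonal to `e₂, e₄, Je₄`. Then `(v₁, v₂, Jv₂, Jv₁)` is a
`g`-orthonormal frame adapted to `J`, its dual coframe `fⁱ = g(vᵢ, ·)` satisfies
`Ω = f¹∧f⁴ + f²∧f³`, and the orthogonality relations give the filtration.
-/

open ExteriorAlgebra

theorem apply_eq_sum_apply_single_mul {R ι : Type*} [CommRing R] [Fintype ι] [DecidableEq ι]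
    (φ : (ι → R) →ₗ[R] R) (x : ι → R) : φ x = ∑ k, φ (Pi.single k 1) * x k := by
  conv_lhs => rw [← (Pi.basisFun R ι).sum_repr x]
  simp [mul_comm]

theorem mem_span_image_single_of_apply_eq_zero {R ι : Type*} [CommRing R] [Fintype ι]
    [DecidableEq ι] {f : ι → R} {s : Set ι} (hf : ∀ k ∉ s, f k = 0) :
    f ∈ Submodule.span R ((fun k => Pi.single k 1) '' s) := by
  rw [← (Pi.basisFun R ι).sum_repr f]
  refine Submodule.sum_mem _ fun k _ => ?_
  by_cases hk : k ∈ s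
  · exact Submodule.smul_mem _ _ (Submodule.subset_span ⟨k, hk, by simp⟩)
  · simp [hf k hk]

section BilinearForm

variable {V : Type*} [AddCommGroup V] [Module ℝ V] (g : V →ₗ[ℝ] V →ₗ[ℝ] ℝ)

theorem exists_smul_apply_smul_self_eq_one {x : V} (hx : 0 < g x x) :
    ∃ r : ℝ, g (r • x) (r • x) = 1 := by
  refine ⟨(√(g x x))⁻¹, ?_⟩
  have hsq : √(g x x) * √(g x x) = g x x := Real.mul_self_sqrt hx.le
  have hne : √(g x x) ≠ 0 := (Real.sqrt_pos.mpr hx).ne'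
  simp only [map_smul, LinearMap.smul_apply, smul_eq_mul]
  field_simp
  linarith

theorem exists_unit_orthogonal_of_lt_finrank [FiniteDimensional ℝ V]
    (hpos : ∀ x : V, x ≠ 0 → 0 < g x x) {m : ℕ} (w : Fin m → V)
    (hm : m < Module.finrank ℝ V) : ∃ v : V, g v v = 1 ∧ ∀ k, g v (w k) = 0 := by
  let L : V →ₗ[ℝ] (Fin m → ℝ) := LinearMap.pi fun k => g.flip (w k)
  obtain ⟨x, hxL, hx⟩ := Submodule.exists_mem_ne_zero_of_ne_bot
    (LinearMap.ker_ne_bot_of_finrank_lt (f := L) (by simpa using hm))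
  obtain ⟨r, hr⟩ := exists_smul_apply_smul_self_eq_one g (hpos x hx)
  refine ⟨r • x, hr, fun k => ?_⟩
  have hxk : g x (w k) = 0 := congrFun hxL k
  simp [hxk]

theorem eq_sum_apply_smul_of_orthonormal [FiniteDimensional ℝ V] {ι : Type*} [Fintype ι]
    [DecidableEq ι] {v : ι → V} (hv : ∀ i j, g (v i) (v j) = if i = j then 1 else 0)
    (hcard : Fintype.card ι = Module.finrank ℝ V) (x : V) : x = ∑ i, g x (v i) • v i := by
  have hli : LinearIndependent ℝ v :=
    LinearMap.linearIndependent_of_isOrthoᵢ (B := g)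
      (fun i j hij => by simp [Function.onFun, hv, hij]) (fun i => by simp [hv])
  let b := basisOfLinearIndependentOfCardEqFinrank' v hli hcard
  have hb : ⇑b = v := coe_basisOfLinearIndependentOfCardEqFinrank' v hli hcard
  have hcoord : ∀ i, g x (v i) = b.repr x i := fun i => by
    conv_lhs => rw [← b.sum_repr x]
    simp [hb, hv]
  conv_lhs => rw [← b.sum_repr x]
  simp [hb, hcoord]

variable (J : V →ₗ[ℝ] V)

theorem apply_J_left_eq_neg (hJ2 : ∀ X, J (J X) = -X) (hcompat : ∀ X Y, g (J X) (J Y) = g X Y)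
    (X Y : V) : g (J X) Y = -g X (J Y) := by
  rw [← hcompat, hJ2, map_neg, LinearMap.neg_apply]

theorem apply_J_self_eq_zero (hsymm : ∀ X Y, g X Y = g Y X) (hJ2 : ∀ X, J (J X) = -X)
    (hcompat : ∀ X Y, g (J X) (J Y) = g X Y) (X : V) : g (J X) X = 0 := by
  have h := apply_J_left_eq_neg g J hJ2 hcompat X X
  rw [hsymm X] at h
  linarith

def adaptedFrame (v₁ v₂ : V) : Fin 4 → V := ![v₁, v₂, J v₂, J v₁]

theorem adaptedFrame_orthonormal (hsymm : ∀ X Y, g X Y = g Y X) (hJ2 : ∀ X, J (J X) = -X)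
    (hcompat : ∀ X Y, g (J X) (J Y) = g X Y) {v₁ v₂ : V} (h₁ : g v₁ v₁ = 1) (h₂ : g v₂ v₂ = 1)
    (h₁₂ : g v₁ v₂ = 0) (hJ₁₂ : g (J v₁) v₂ = 0) (i j : Fin 4) :
    g (adaptedFrame J v₁ v₂ i) (adaptedFrame J v₁ v₂ j) = if i = j then 1 else 0 := by
  have hJ₂₁ : g (J v₂) v₁ = 0 := by
    rw [apply_J_left_eq_neg g J hJ2 hcompat, hsymm, hJ₁₂, neg_zero]
  have hJ₁₁ := apply_J_self_eq_zero g J hsymm hJ2 hcompat v₁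
  have hJ₂₂ := apply_J_self_eq_zero g J hsymm hJ2 hcompat v₂
  fin_cases i <;> fin_cases j <;>
    simp [adaptedFrame, hcompat, h₁, h₂, h₁₂, hJ₁₂, hJ₂₁, hJ₁₁, hJ₂₂, hsymm v₂ v₁,
      hsymm v₁ (J _), hsymm v₂ (J _)]

theorem apply_J_eq_adaptedFrame_expansion [FiniteDimensional ℝ V]
    (hrank : Module.finrank ℝ V = 4) (hJ2 : ∀ X, J (J X) = -X) {v₁ v₂ : V}
    (hv : ∀ i j, g (adaptedFrame J v₁ v₂ i) (adaptedFrame J v₁ v₂ j) = if i = j then 1 else 0)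
    (X Y : V) :
    g (J X) Y = g X v₁ * g (J v₁) Y - g X (J v₁) * g v₁ Y
      + (g X v₂ * g (J v₂) Y - g X (J v₂) * g v₂ Y) := by
  conv_lhs => rw [eq_sum_apply_smul_of_orthonormal g hv (by simp [hrank]) X]
  simp [Fin.sum_univ_four, adaptedFrame, hJ2]
  ring

end BilinearForm

theorem ιMulti_basis_ne_zero {R M : Type*} [CommRing R] [Nontrivial R] [AddCommGroup M]
    [Module R M] {n : ℕ} (b : Module.Basis (Fin n) R M) : ιMulti R n b ≠ 0 := by
  have hid : Finset.univ.orderEmbOfFin (Finset.card_fin n) = RelEmbedding.refl (· ≤ ·) :=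
    (Finset.orderEmbOfFin_unique' _ fun _ => Finset.mem_univ _).symm
  simpa [basis_apply_ofCard _ (Finset.card_fin n), ιMulti_family,
    Set.powersetCard.ofFinEmbEquiv_symm_apply, Set.powersetCard.ofCard, hid]
    using b.ExteriorAlgebra.ne_zero Finset.univ

theorem E_mul_E_mul_E_mul_E_ne_zero : E 0 * E 1 * E 2 * E 3 ≠ 0 := by
  simpa [E, ιMulti_apply, List.ofFn_succ, mul_assoc, Matrix.vecTail]
    using ιMulti_basis_ne_zero (Pi.basisFun ℝ (Fin 4))

theorem E_mul_self (i : Fin 4) : E i * E i = 0 := ι_sq_zero _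

theorem E_mul_self_mul (i : Fin 4) (x : ExteriorAlgebra ℝ (Fin 4 → ℝ)) :
    E i * (E i * x) = 0 := by
  rw [← mul_assoc, E_mul_self, zero_mul]

theorem E_mul_E_comm (i j : Fin 4) : E i * E j = -(E j * E i) :=
  eq_neg_of_add_eq_zero_left (ι_add_mul_swap _ _)

theorem E_mul_E_mul_comm (i j : Fin 4) (x : ExteriorAlgebra ℝ (Fin 4 → ℝ)) :
    E i * (E j * x) = -(E j * (E i * x)) := by
  rw [← mul_assoc, ← mul_assoc, E_mul_E_comm i j, neg_mul]

theorem ι_eq_sum_smul_E (a : Fin 4 → ℝ) : ι ℝ a = ∑ k, a k • E k := by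
  conv_lhs => rw [← (Pi.basisFun ℝ (Fin 4)).sum_repr a]
  simp [E]

theorem ι_mul_ι_eq_twoForm (a b : Fin 4 → ℝ) :
    ι ℝ a * ι ℝ b = twoForm (fun i j => a i * b j - a j * b i) := by
  simp [ι_eq_sum_smul_E, twoForm, Finset.sum_filter, Fin.sum_univ_four, add_mul, mul_add,
    E_mul_self, E_mul_E_comm 1 0, E_mul_E_comm 2 0, E_mul_E_comm 3 0,
    E_mul_E_comm 2 1, E_mul_E_comm 3 1, E_mul_E_comm 3 2]
  module

theorem twoForm_add (c c' : Fin 4 → Fin 4 → ℝ) :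
    twoForm (c + c') = twoForm c + twoForm c' := by
  simp [twoForm, add_smul, Finset.sum_add_distrib]

theorem twoForm_mul_E0_mul_E2 (c : Fin 4 → Fin 4 → ℝ) :
    twoForm c * (E 0 * E 2) = -c 1 3 • (E 0 * E 1 * E 2 * E 3) := by
  simp [twoForm, Finset.sum_filter, Fin.sum_univ_four, add_mul, mul_assoc, E_mul_self,
    E_mul_self_mul, E_mul_E_mul_comm 1 0, E_mul_E_mul_comm 2 0, E_mul_E_mul_comm 3 0,
    E_mul_E_comm 3 2]

theorem dTwoForm_eq (lam : ℝ) (c : Fin 4 → Fin 4 → ℝ) :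
    dTwoForm lam c = (lam * c 1 3) • (E 0 * E 2 * E 3) - c 2 3 • (E 0 * E 1 * E 2) := by
  simp [dTwoForm, dE, Finset.sum_filter, Fin.sum_univ_four, mul_assoc, E_mul_self,
    E_mul_self_mul, E_mul_E_mul_comm 1 0, E_mul_E_mul_comm 2 0, E_mul_E_comm 2 1]
  module

theorem coeffs_eq_zero_of_mul_E0_mul_E2_eq_zero_of_dTwoForm_eq_zero
    {lam : ℝ} {c : Fin 4 → Fin 4 → ℝ}
    (hLag : twoForm c * (E 0 * E 2) = 0) (hclosed : dTwoForm lam c = 0) :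
    c 1 3 = 0 ∧ c 2 3 = 0 := by
  have h₁₃ : c 1 3 = 0 := by
    simpa [twoForm_mul_E0_mul_E2, E_mul_E_mul_E_mul_E_ne_zero] using hLag
  refine ⟨h₁₃, ?_⟩
  simpa [dTwoForm_eq, h₁₃, left_ne_zero_of_mul E_mul_E_mul_E_mul_E_ne_zero] using hclosed

-- Hypothesis names use the 1-based indices of the paper: `Pi.single 3 1` is `e₄`.
theorem exists_adaptedFrame_filtered (g : (Fin 4 → ℝ) →ₗ[ℝ] (Fin 4 → ℝ) →ₗ[ℝ] ℝ)
    (hsymm : ∀ X Y, g X Y = g Y X) (hposdef : ∀ X, X ≠ 0 → 0 < g X X)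
    (J : (Fin 4 → ℝ) →ₗ[ℝ] (Fin 4 → ℝ)) (hJ2 : ∀ X, J (J X) = -X)
    (hcompat : ∀ X Y, g (J X) (J Y) = g X Y)
    (hc₂₄ : g (J (Pi.single 1 1)) (Pi.single 3 1) = 0)
    (hc₃₄ : g (J (Pi.single 2 1)) (Pi.single 3 1) = 0) :
    ∃ v₁ v₂ : Fin 4 → ℝ,
      (∀ i j, g (adaptedFrame J v₁ v₂ i) (adaptedFrame J v₁ v₂ j) = if i = j then 1 else 0) ∧
      (∀ k, k ≠ 0 → g v₁ (Pi.single k 1) = 0) ∧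
      g v₂ (Pi.single 1 1) = 0 ∧ g v₂ (Pi.single 3 1) = 0 ∧ g (J v₂) (Pi.single 3 1) = 0 := by
  have hJe₄ : J (Pi.single 3 1) ≠ 0 := fun h => by simpa [h] using hJ2 (Pi.single 3 1)
  have hJe₄_perp : ∀ k, k ≠ 0 → g (J (Pi.single 3 1)) (Pi.single k 1) = 0 := by
    intro k hk
    have hskew : ∀ k, g (J (Pi.single 3 1)) (Pi.single k 1) =
        -g (J (Pi.single k 1)) (Pi.single 3 1) := fun k => by
      rw [apply_J_left_eq_neg g J hJ2 hcompat, hsymm]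
    fin_cases k
    · exact absurd rfl hk
    · simpa [hskew] using hc₂₄
    · simpa [hskew] using hc₃₄
    · exact apply_J_self_eq_zero g J hsymm hJ2 hcompat _
  obtain ⟨r, hv₁⟩ := exists_smul_apply_smul_self_eq_one g (hposdef _ hJe₄)
  obtain ⟨v₂, hv₂, hv₂_perp⟩ := exists_unit_orthogonal_of_lt_finrank g hposdef
    ![Pi.single 1 1, Pi.single 3 1, J (Pi.single 3 1)] (by simp)
  have hv₂Je₄ : g v₂ (J (Pi.single 3 1)) = 0 := hv₂_perp 2
  have hv₂e₄ : g v₂ (Pi.single 3 1) = 0 := hv₂_perp 1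
  refine ⟨r • J (Pi.single 3 1), v₂, adaptedFrame_orthonormal g J hsymm hJ2 hcompat hv₁ hv₂
    (by simp [hsymm _ v₂, hv₂Je₄]) (by simp [hJ2, hsymm _ v₂, hv₂e₄]),
    fun k hk => by simp [hJe₄_perp k hk], hv₂_perp 0, hv₂e₄,
    by rw [apply_J_left_eq_neg g J hJ2 hcompat, hv₂Je₄, neg_zero]⟩

/-- Filtration lemma: for an almost-Kähler structure `(g, J, Ω)` on the Lie algebra with
structure equations `de¹ = 0`, `de² = λ e¹∧e³`, `de³ = 0`, `de⁴ = e¹∧e²`, whose Kähler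
form is closed and satisfies `Ω ∧ e¹ ∧ e³ = 0`, there is a `g`-orthonormal basis
`(f¹, f², f³, f⁴)` of `V*` with `Ω = f¹∧f⁴ + f²∧f³`, `f¹ ∈ ⟨e¹⟩`, `f² ∈ ⟨e¹,e³⟩`,
`f³ ∈ ⟨e¹,e³,e²⟩`. -/
theorem nil_filtration (lam : ℝ)
    (g : (Fin 4 → ℝ) →ₗ[ℝ] (Fin 4 → ℝ) →ₗ[ℝ] ℝ)
    (hsymm : ∀ X Y : Fin 4 → ℝ, g X Y = g Y X)
    (hposdef : ∀ X : Fin 4 → ℝ, X ≠ 0 → 0 < g X X)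
    (J : (Fin 4 → ℝ) →ₗ[ℝ] (Fin 4 → ℝ))
    (hJ2 : ∀ X : Fin 4 → ℝ, J (J X) = -X)
    (hcompat : ∀ X Y : Fin 4 → ℝ, g (J X) (J Y) = g X Y)
    (Ω : ExteriorAlgebra ℝ (Fin 4 → ℝ))
    (hΩ : Ω = twoForm (fun i j => g (J (Pi.single i 1)) (Pi.single j 1)))
    (hclosed : dTwoForm lam (fun i j => g (J (Pi.single i 1)) (Pi.single j 1)) = 0)
    (hLag : Ω * (E 0 * E 2) = 0) :
    ∃ v f : Fin 4 → (Fin 4 → ℝ),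
      (∀ i j, g (v i) (v j) = if i = j then 1 else 0) ∧
      (∀ i j, (∑ k, f i k * v j k) = if i = j then (1:ℝ) else 0) ∧
      Ω = ExteriorAlgebra.ι ℝ (f 0) * ExteriorAlgebra.ι ℝ (f 3)
          + ExteriorAlgebra.ι ℝ (f 1) * ExteriorAlgebra.ι ℝ (f 2) ∧
      f 0 ∈ Submodule.span ℝ ({Pi.single 0 1} : Set (Fin 4 → ℝ)) ∧
      f 1 ∈ Submodule.span ℝ ({Pi.single 0 1, Pi.single 2 1} : Set (Fin 4 → ℝ)) ∧
      f 2 ∈ Submodule.span ℝ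
        ({Pi.single 0 1, Pi.single 2 1, Pi.single 1 1} : Set (Fin 4 → ℝ)) := by
  obtain ⟨hc₂₄, hc₃₄⟩ :=
    coeffs_eq_zero_of_mul_E0_mul_E2_eq_zero_of_dTwoForm_eq_zero (hΩ ▸ hLag) hclosed
  obtain ⟨v₁, v₂, hv, hv₁, hv₂e₂, hv₂e₄, hJv₂e₄⟩ :=
    exists_adaptedFrame_filtered g hsymm hposdef J hJ2 hcompat hc₂₄ hc₃₄
  set f : Fin 4 → Fin 4 → ℝ := fun i k => g (adaptedFrame J v₁ v₂ i) (Pi.single k 1)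
  refine ⟨adaptedFrame J v₁ v₂, f, hv, fun i j => ?_, ?_, ?_, ?_, ?_⟩
  · rw [← hv, apply_eq_sum_apply_single_mul (g _)]
  · rw [hΩ, ι_mul_ι_eq_twoForm, ι_mul_ι_eq_twoForm, ← twoForm_add]
    congr 1
    funext i j
    rw [apply_J_eq_adaptedFrame_expansion g J (Module.finrank_fin_fun ℝ) hJ2 hv]
    simp [f, adaptedFrame, hsymm (Pi.single i 1)]
    ring
  · simpa using mem_span_image_single_of_apply_eq_zero (s := {0}) (f := f 0) fun k hk => by
      simpa [f, adaptedFrame] using hv₁ k hk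
  · simpa [Set.image_insert_eq] using
      mem_span_image_single_of_apply_eq_zero (s := {0, 2}) (f := f 1) fun k hk => by
        fin_cases k <;> simp [f, adaptedFrame, hv₂e₂, hv₂e₄] at hk ⊢
  · simpa [Set.image_insert_eq] using
      mem_span_image_single_of_apply_eq_zero (s := {0, 2, 1}) (f := f 2) fun k hk => by
        fin_cases k <;> simp [f, adaptedFrame, hJv₂e₄] at hk ⊢
end
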